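/- arXiv:1903.10340 — 2 statements merged into one kernel-verified Lean document; each statement's English description precedes it below -/
import Mathlib

section
/- Let δ ≥ 0, p ≥ 0, Ste > 0. For γ > 0 let λ_γ be the unique solution in (0, λ₀) of F(β_γ(λ_γ)) = (√π/Ste)·λ_γ·exp(λ_γ²)·erf(λ_γ), where F(x) = x + (δ/(p+1))·x^(p+1) and β_γ(x) = 1 − (2x·exp(x²))/(γ·Ste). Then γ ↦ λ_γ is strictly increasing: if 0 < γ₁ < γ₂ then λ_{γ₁} < λ_{γ₂}. -/
/-!
If `λ_{γ₂} ≤ λ_{γ₁}`, then, as `x ↦ x exp x²` increases, `β_γ(x)` decreases in `x` and increases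
in `γ`, so `β_{γ₁}(λ_{γ₁}) < β_{γ₂}(λ_{γ₂})`; since `F` is strictly increasing on `[0, ∞)` the
left-hand side of the equation is then strictly larger at `γ₂`. But the right-hand side
`λ ↦ λ exp(λ²) erf λ` is increasing on `[0, ∞)`, so it is at most as large there.
-/

open Real

noncomputable def erf (x : ℝ) : ℝ := (2 / Real.sqrt π) * ∫ t in (0:ℝ)..x, Real.exp (-t^2)

open Set

theorem erf_monotone : Monotone erf := by
  intro x y hxy
  have hint : ∀ a b : ℝ, IntervalIntegrable (fun t => exp (-t ^ 2)) MeasureTheory.volume a b :=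
    fun a b => (by fun_prop : Continuous fun t : ℝ => exp (-t ^ 2)).intervalIntegrable a b
  have hxy_nonneg : 0 ≤ ∫ t in x..y, exp (-t ^ 2) :=
    intervalIntegral.integral_nonneg hxy fun t _ => (exp_pos _).le
  unfold erf
  gcongr
  rw [← intervalIntegral.integral_add_adjacent_intervals (hint 0 x) (hint x y)]
  linarith

theorem erf_nonneg {x : ℝ} (hx : 0 ≤ x) : 0 ≤ erf x := by
  simpa [erf] using erf_monotone hx

theorem monotoneOn_mul_exp_sq : MonotoneOn (fun x => x * exp (x ^ 2)) (Ici 0) := by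
  intro x (hx : 0 ≤ x) y (hy : 0 ≤ y) hxy
  have hexp : exp (x ^ 2) ≤ exp (y ^ 2) := exp_le_exp.2 (pow_le_pow_left₀ hx hxy 2)
  exact mul_le_mul hxy hexp (exp_pos _).le hy

theorem monotoneOn_mul_exp_sq_mul_erf :
    MonotoneOn (fun x => x * exp (x ^ 2) * erf x) (Ici 0) := by
  intro x (hx : 0 ≤ x) y (hy : 0 ≤ y) hxy
  exact mul_le_mul (monotoneOn_mul_exp_sq hx hy hxy) (erf_monotone hxy) (erf_nonneg hx)
    (by positivity)

theorem strictMonoOn_add_mul_rpow {c q : ℝ} (hc : 0 ≤ c) (hq : 0 ≤ q) :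
    StrictMonoOn (fun x => x + c * x ^ q) (Ici 0) := by
  intro x (hx : 0 ≤ x) y _ hxy
  have hpow : c * x ^ q ≤ c * y ^ q := by gcongr
  dsimp only
  linarith

-- `β_{γ₁}(l₁) < β_{γ₂}(l₂)`
theorem one_sub_mul_exp_sq_div_lt {Ste γ₁ γ₂ l₁ l₂ : ℝ} (hSte : 0 < Ste) (hγ₁ : 0 < γ₁)
    (hγ₁₂ : γ₁ < γ₂) (hl₂ : 0 < l₂) (hl : l₂ ≤ l₁) :
    1 - 2 * l₁ * exp (l₁ ^ 2) / (γ₁ * Ste) < 1 - 2 * l₂ * exp (l₂ ^ 2) / (γ₂ * Ste) := by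
  have hu : l₂ * exp (l₂ ^ 2) ≤ l₁ * exp (l₁ ^ 2) :=
    monotoneOn_mul_exp_sq hl₂.le (hl₂.le.trans hl) hl
  have hdiv : 2 * l₂ * exp (l₂ ^ 2) / (γ₂ * Ste) < 2 * l₁ * exp (l₁ ^ 2) / (γ₁ * Ste) := by
    have hl₁ : 0 < l₁ := hl₂.trans_le hl
    apply div_lt_div₀' _ (by gcongr) (by positivity) (mul_pos hγ₁ hSte)
    simp only [mul_assoc]
    gcongr
  linarith

theorem lambda_gamma_strictMono_general (δ p Ste γ₁ γ₂ l₁ l₂ : ℝ) (hδ : 0 ≤ δ) (hp : 0 ≤ p)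
    (hSte : 0 < Ste) (hγ₁ : 0 < γ₁) (hγ₁₂ : γ₁ < γ₂)
    (hl₂ : 0 < l₂)
    (hβ₁ : 0 ≤ 1 - (2 * l₁ * Real.exp (l₁^2)) / (γ₁ * Ste))
    (heq₁ : (1 - (2 * l₁ * Real.exp (l₁^2)) / (γ₁ * Ste)) +
        (δ / (p + 1)) * (1 - (2 * l₁ * Real.exp (l₁^2)) / (γ₁ * Ste)) ^ (p + 1) =
      (Real.sqrt π / Ste) * (l₁ * Real.exp (l₁^2) * erf l₁))
    (heq₂ : (1 - (2 * l₂ * Real.exp (l₂^2)) / (γ₂ * Ste)) +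
        (δ / (p + 1)) * (1 - (2 * l₂ * Real.exp (l₂^2)) / (γ₂ * Ste)) ^ (p + 1) =
      (Real.sqrt π / Ste) * (l₂ * Real.exp (l₂^2) * erf l₂)) :
    l₁ < l₂ := by
  by_contra! hl
  have hβ := one_sub_mul_exp_sq_div_lt hSte hγ₁ hγ₁₂ hl₂ hl
  have hF := strictMonoOn_add_mul_rpow (c := δ / (p + 1)) (q := p + 1)
    (div_nonneg hδ (by linarith)) (by linarith) hβ₁ (hβ₁.trans hβ.le) hβ
  have hrhs := monotoneOn_mul_exp_sq_mul_erf hl₂.le (hl₂.le.trans hl) hl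
  simp only [heq₁, heq₂] at hF
  exact (lt_of_mul_lt_mul_left hF (div_pos (sqrt_pos.2 pi_pos) hSte).le).not_ge hrhs

/-- γ ↦ λ_γ is strictly increasing: if 0 < γ₁ < γ₂ then λ_{γ₁} < λ_{γ₂}. -/
theorem lambda_gamma_strictMono (δ p Ste γ₁ γ₂ l₁ l₂ : ℝ) (hδ : 0 ≤ δ) (hp : 0 ≤ p)
    (hSte : 0 < Ste) (hγ₁ : 0 < γ₁) (hγ₁₂ : γ₁ < γ₂)
    (hl₁ : 0 < l₁) (hl₂ : 0 < l₂)
    (hβ₁ : 0 ≤ 1 - (2 * l₁ * Real.exp (l₁^2)) / (γ₁ * Ste))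
    (hβ₂ : 0 ≤ 1 - (2 * l₂ * Real.exp (l₂^2)) / (γ₂ * Ste))
    (heq₁ : (1 - (2 * l₁ * Real.exp (l₁^2)) / (γ₁ * Ste)) +
        (δ / (p + 1)) * (1 - (2 * l₁ * Real.exp (l₁^2)) / (γ₁ * Ste)) ^ (p + 1) =
      (Real.sqrt π / Ste) * (l₁ * Real.exp (l₁^2) * erf l₁))
    (heq₂ : (1 - (2 * l₂ * Real.exp (l₂^2)) / (γ₂ * Ste)) +
        (δ / (p + 1)) * (1 - (2 * l₂ * Real.exp (l₂^2)) / (γ₂ * Ste)) ^ (p + 1) =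
      (Real.sqrt π / Ste) * (l₂ * Real.exp (l₂^2) * erf l₂)) :
    l₁ < l₂ :=
  lambda_gamma_strictMono_general δ p Ste γ₁ γ₂ l₁ l₂ hδ hp hSte hγ₁ hγ₁₂ hl₂ hβ₁ heq₁ heq₂
end

section
/- With the same notation, λ_γ → λ as γ → ∞, where λ is the unique positive solution of λ·exp(λ²)·erf(λ) = (Ste/√π)·(1 + δ/(p+1)). -/
open Real Filter

/-!
Put `g x = x e^{x²} erf x`, strictly increasing on `[0, ∞)`. Because `β + c β^{p+1} ≤ 1 + c` for
`β ∈ [0, 1]`, the equation for `λ_γ` forces `g λ_γ ≤ g λ`, i.e. `λ_γ ≤ λ`. Then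
`0 ≤ 1 - β_γ ≤ 2 λ e^{λ²} / (γ Ste) → 0`, so the equation gives `g λ_γ → g λ`, and strict
monotonicity of `g` on an interval turns this into `λ_γ → λ`.
-/

open Set Topology

theorem StrictMonoOn.tendsto_of_tendsto_comp {ι α β : Type*} [LinearOrder α] [TopologicalSpace α]
    [OrderTopology α] [LinearOrder β] [TopologicalSpace β] [OrderTopology β] {f : α → β}
    {s : Set α} (hs : s.OrdConnected) (hf : StrictMonoOn f s) {l : Filter ι} {u : ι → α}
    (hu : ∀ᶠ i in l, u i ∈ s) {x : α} (hx : x ∈ s) (hfu : Tendsto (f ∘ u) l (𝓝 (f x))) :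
    Tendsto u l (𝓝 x) := by
  rw [tendsto_order]
  constructor
  · intro a hax
    by_cases ha : a ∈ s
    · filter_upwards [hu, hfu.eventually (lt_mem_nhds (hf ha hx hax))] with i hui hfui
      exact (hf.lt_iff_lt ha hui).mp hfui
    · filter_upwards [hu] with i hui
      by_contra! hia
      exact ha (hs.out hui hx ⟨hia, hax.le⟩)
  · intro a hxa
    by_cases ha : a ∈ s
    · filter_upwards [hu, hfu.eventually (gt_mem_nhds (hf hx ha hxa))] with i hui hfui
      exact (hf.lt_iff_lt hui ha).mp hfui
    · filter_upwards [hu] with i hui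
      by_contra! hia
      exact ha (hs.out hx hui ⟨hxa.le, hia⟩)

theorem erf_strictMono : StrictMono erf := by
  intro a b hab
  have hint : ∀ a b : ℝ, IntervalIntegrable (fun t => exp (-t ^ 2)) MeasureTheory.volume a b :=
    fun a b => (by fun_prop : Continuous fun t : ℝ => exp (-t ^ 2)).intervalIntegrable a b
  have hpos : 0 < ∫ t in a..b, exp (-t ^ 2) :=
    intervalIntegral.intervalIntegral_pos_of_pos (hint a b) (fun t => exp_pos _) hab
  unfold erf
  rw [← intervalIntegral.integral_add_adjacent_intervals (hint 0 a) (hint a b)]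
  have : 0 < 2 / √π := by positivity
  nlinarith

theorem erf_zero : erf 0 = 0 := by simp [erf]

theorem strictMonoOn_mul_exp_sq : StrictMonoOn (fun x => x * exp (x ^ 2)) (Ici 0) := by
  intro a ha b hb hab
  have hsq : a ^ 2 ≤ b ^ 2 := pow_le_pow_left₀ ha hab.le 2
  exact mul_lt_mul hab (exp_le_exp.mpr hsq) (exp_pos _) hb

theorem strictMonoOn_mul_exp_sq_mul_erf :
    StrictMonoOn (fun x => x * exp (x ^ 2) * erf x) (Ici 0) := by
  intro a ha b hb hab
  exact mul_lt_mul'' (strictMonoOn_mul_exp_sq ha hb hab) (erf_strictMono hab)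
    (mul_nonneg ha (exp_pos _).le) (erf_zero ▸ erf_strictMono.monotone ha)

theorem add_mul_rpow_le_one_add {b c q : ℝ} (hb₀ : 0 ≤ b) (hb₁ : b ≤ 1) (hc : 0 ≤ c)
    (hq : 0 ≤ q) : b + c * b ^ q ≤ 1 + c := by
  have := rpow_le_one hb₀ hb₁ hq
  nlinarith

theorem tendsto_div_mul_atTop_of_bounded {a : ℝ → ℝ} {K S : ℝ} (hS : 0 < S)
    (ha : ∀ᶠ γ in atTop, 0 ≤ a γ ∧ a γ ≤ K) :
    Tendsto (fun γ => a γ / (γ * S)) atTop (𝓝 0) := by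
  have hK : Tendsto (fun γ => K / (γ * S)) atTop (𝓝 0) :=
    tendsto_const_nhds.div_atTop (tendsto_id.atTop_mul_const hS)
  refine tendsto_of_tendsto_of_tendsto_of_le_of_le' tendsto_const_nhds hK ?_ ?_
  · filter_upwards [ha, eventually_gt_atTop 0] with γ hγ hγ₀
    exact div_nonneg hγ.1 (by positivity)
  · filter_upwards [ha, eventually_gt_atTop 0] with γ hγ hγ₀
    exact div_le_div_of_nonneg_right hγ.2 (by positivity)

theorem tendsto_one_sub_mul_exp_sq_div_mul_atTop {u : ℝ → ℝ} {b S : ℝ} (hS : 0 < S)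
    (hu : ∀ᶠ γ in atTop, 0 ≤ u γ ∧ u γ ≤ b) :
    Tendsto (fun γ => 1 - 2 * u γ * exp (u γ ^ 2) / (γ * S)) atTop (𝓝 1) := by
  have hdiv := tendsto_div_mul_atTop_of_bounded (a := fun γ => 2 * u γ * exp (u γ ^ 2))
    (K := 2 * (b * exp (b ^ 2))) hS <| by
      filter_upwards [hu] with γ ⟨hu₀, hub⟩
      have := strictMonoOn_mul_exp_sq.monotoneOn hu₀ (hu₀.trans hub) hub
      exact ⟨by positivity, by linarith⟩
  simpa using (tendsto_const_nhds (x := (1 : ℝ))).sub hdiv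

/-- λ_γ → λ as γ → ∞. -/
theorem lambda_gamma_tendsto_lambda (δ p Ste l : ℝ) (hδ : 0 ≤ δ) (hp : 0 ≤ p)
    (hSte : 0 < Ste) (hl : 0 < l)
    (hlam : l * Real.exp (l^2) * erf l = (Ste / Real.sqrt π) * (1 + δ / (p + 1)))
    (lam : ℝ → ℝ)
    (hlampos : ∀ γ > (0:ℝ), 0 < lam γ)
    (hβ : ∀ γ > (0:ℝ), 0 ≤ 1 - (2 * lam γ * Real.exp ((lam γ)^2)) / (γ * Ste))
    (heq : ∀ γ > (0:ℝ),
      (1 - (2 * lam γ * Real.exp ((lam γ)^2)) / (γ * Ste)) +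
        (δ / (p + 1)) * (1 - (2 * lam γ * Real.exp ((lam γ)^2)) / (γ * Ste)) ^ (p + 1) =
      (Real.sqrt π / Ste) * (lam γ * Real.exp ((lam γ)^2) * erf (lam γ))) :
    Tendsto lam atTop (nhds l) := by
  set g : ℝ → ℝ := fun x => x * exp (x ^ 2) * erf x
  set c := δ / (p + 1)
  set β : ℝ → ℝ := fun γ => 1 - 2 * lam γ * exp (lam γ ^ 2) / (γ * Ste)
  have hc : 0 ≤ c := div_nonneg hδ (by linarith)
  have hK : 0 < √π / Ste := by positivity
  have hgl : √π / Ste * g l = 1 + c := by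
    simp only [g, hlam]; field_simp
  have hlam_le : ∀ γ > 0, lam γ ≤ l := fun γ hγ =>
    have hβ_le_one : β γ ≤ 1 := sub_le_self _ (by have := (hlampos γ hγ).le; positivity)
    (strictMonoOn_mul_exp_sq_mul_erf.le_iff_le (hlampos γ hγ).le hl.le).mp <|
      le_of_mul_le_mul_left (by
        rw [← heq γ hγ, hgl]
        exact add_mul_rpow_le_one_add (hβ γ hγ) hβ_le_one hc (by linarith)) hK
  have hβ_tendsto : Tendsto β atTop (𝓝 1) :=
    tendsto_one_sub_mul_exp_sq_div_mul_atTop hSte <| by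
      filter_upwards [eventually_gt_atTop 0] with γ hγ using ⟨(hlampos γ hγ).le, hlam_le γ hγ⟩
  have hg_tendsto : Tendsto (g ∘ lam) atTop (𝓝 (g l)) := by
    have hsum : Tendsto (fun γ => β γ + c * β γ ^ (p + 1)) atTop (𝓝 (√π / Ste * g l)) := by
      rw [hgl]
      simpa using hβ_tendsto.add ((hβ_tendsto.rpow_const (Or.inr (by linarith))).const_mul c)
    refine (tendsto_const_smul_iff₀ hK.ne').mp (hsum.congr' ?_)
    filter_upwards [eventually_gt_atTop 0] with γ hγ using heq γ hγ
  exact strictMonoOn_mul_exp_sq_mul_erf.tendsto_of_tendsto_comp ordConnected_Ici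
    (by filter_upwards [eventually_gt_atTop 0] with γ hγ using (hlampos γ hγ).le) hl.le hg_tendsto
end
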